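/- arXiv:2206.09338 — 2 statements merged into one kernel-verified Lean document; each statement's English description precedes it below -/
import Mathlib

section
/- Let I ⊂ ℝ be an interval and let E, G : I → ℂ^{n×n} and F, c : I → ℝ be functions such that for all t ∈ I: ‖E(t)‖_F = 1, E is differentiable with E'(t) = −G(t) + Re⟨G(t), E(t)⟩ · E(t), F is differentiable with F'(t) = c(t) · Re⟨G(t), E'(t)⟩, and c(t) > 0. Then F'(t) ≤ 0 for all t ∈ I; in fact c(t)⁻¹ F'(t) = −‖G(t)‖_F² + (Re⟨G(t), E(t)⟩)² ≤ 0. -/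
open Matrix

/-- Frobenius inner product `⟨X,Y⟩ = tr(X*Y) = Σᵢⱼ conj(Xᵢⱼ) Yᵢⱼ` on complex matrices. -/
noncomputable def frobInner {n : ℕ} (X Y : Matrix (Fin n) (Fin n) ℂ) : ℂ :=
  ∑ i, ∑ j, (starRingEnd ℂ) (X i j) * Y i j

/-- Frobenius norm. -/
noncomputable def frobNorm {n : ℕ} (X : Matrix (Fin n) (Fin n) ℂ) : ℝ :=
  Real.sqrt (frobInner X X).re

/-!
Reading a matrix as the vector of its entries turns `frobInner` into the inner product of
`EuclideanSpace ℂ (Fin n × Fin n)`. There `Re⟨G, -G + Re⟨G, E⟩ E⟩ = -‖G‖² + (Re⟨G, E⟩)²`, and this is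
nonpositive by Cauchy–Schwarz because `‖E‖ = 1`; multiplying by `c > 0` gives the sign of `F'`.
-/

section InnerProductSpace

variable {𝕜 E : Type*} [RCLike 𝕜] [NormedAddCommGroup E] [InnerProductSpace 𝕜 E]

open RCLike

theorem re_inner_neg_add_re_inner_smul (g e : E) :
    re (inner 𝕜 g (-g + (re (inner 𝕜 g e) : 𝕜) • e)) = -‖g‖ ^ 2 + re (inner 𝕜 g e) ^ 2 := by
  rw [inner_add_right, inner_neg_right, inner_smul_right, map_add, map_neg, re_ofReal_mul,
    inner_self_eq_norm_sq, ← sq]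

theorem re_inner_sq_le_norm_sq_of_norm_eq_one {e : E} (he : ‖e‖ = 1) (g : E) :
    re (inner 𝕜 g e) ^ 2 ≤ ‖g‖ ^ 2 := by
  have hcs : |re (inner 𝕜 g e)| ≤ ‖g‖ := by
    simpa [he] using (abs_re_le_norm _).trans (norm_inner_le_norm (𝕜 := 𝕜) g e)
  exact sq_le_sq.2 (by rwa [abs_norm])

end InnerProductSpace

@[simps]
noncomputable def frobeniusToEuclidean (n : ℕ) :
    Matrix (Fin n) (Fin n) ℂ →ₗ[ℂ] EuclideanSpace ℂ (Fin n × Fin n) where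
  toFun X := WithLp.toLp 2 fun p => X p.1 p.2
  map_add' _ _ := rfl
  map_smul' _ _ := rfl

theorem frobInner_eq_inner {n : ℕ} (X Y : Matrix (Fin n) (Fin n) ℂ) :
    frobInner X Y = inner ℂ (frobeniusToEuclidean n X) (frobeniusToEuclidean n Y) := by
  simp [frobInner, PiLp.inner_apply, Fintype.sum_prod_type, mul_comm]

theorem frobNorm_eq_norm {n : ℕ} (X : Matrix (Fin n) (Fin n) ℂ) :
    frobNorm X = ‖frobeniusToEuclidean n X‖ := by
  rw [frobNorm, frobInner_eq_inner, norm_eq_sqrt_re_inner (𝕜 := ℂ), RCLike.re_to_complex]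

theorem re_frobInner_neg_add_re_frobInner_smul {n : ℕ} (G E : Matrix (Fin n) (Fin n) ℂ) :
    (frobInner G (-G + (frobInner G E).re • E)).re = -frobNorm G ^ 2 + (frobInner G E).re ^ 2 := by
  have h := re_inner_neg_add_re_inner_smul (𝕜 := ℂ) (frobeniusToEuclidean n G)
    (frobeniusToEuclidean n E)
  rw [← map_neg, ← frobInner_eq_inner, ← map_smul, ← map_add, ← frobInner_eq_inner,
    ← frobNorm_eq_norm] at h
  simpa [Complex.coe_smul] using h

theorem re_frobInner_sq_le_frobNorm_sq {n : ℕ} {E : Matrix (Fin n) (Fin n) ℂ}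
    (hE : frobNorm E = 1) (G : Matrix (Fin n) (Fin n) ℂ) :
    (frobInner G E).re ^ 2 ≤ frobNorm G ^ 2 := by
  rw [frobNorm_eq_norm] at hE
  simpa [← frobInner_eq_inner, ← frobNorm_eq_norm] using
    re_inner_sq_le_norm_sq_of_norm_eq_one (𝕜 := ℂ) hE (frobeniusToEuclidean n G)

theorem gradient_flow_monotonicity_general
    {n : ℕ} (I : Set ℝ)
    (E E' G : ℝ → Matrix (Fin n) (Fin n) ℂ) (F c : ℝ → ℝ)
    (hnorm : ∀ t ∈ I, frobNorm (E t) = 1)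
    (hode : ∀ t ∈ I, E' t = -(G t) + (frobInner (G t) (E t)).re • E t)
    (hF : ∀ t ∈ I, HasDerivAt F (c t * (frobInner (G t) (E' t)).re) t)
    (hc : ∀ t ∈ I, 0 < c t) :
    ∀ t ∈ I,
      (c t)⁻¹ * deriv F t = -(frobNorm (G t)) ^ 2 + ((frobInner (G t) (E t)).re) ^ 2 ∧
      deriv F t ≤ 0 := by
  intro t ht
  have hdF : deriv F t = c t * (-frobNorm (G t) ^ 2 + (frobInner (G t) (E t)).re ^ 2) := by
    rw [(hF t ht).deriv, hode t ht, re_frobInner_neg_add_re_frobInner_smul]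
  have hle : -frobNorm (G t) ^ 2 + (frobInner (G t) (E t)).re ^ 2 ≤ 0 := by
    linarith [re_frobInner_sq_le_frobNorm_sq (hnorm t ht) (G t)]
  exact ⟨by rw [hdF, inv_mul_cancel_left₀ (hc t ht).ne'],
    hdF ▸ mul_nonpos_of_nonneg_of_nonpos (hc t ht).le hle⟩

/-- Monotonicity along the norm-constrained gradient flow
`E' = -G + Re⟨G,E⟩E`: if `F' = c · Re⟨G,E'⟩` with `c > 0`, then
`c⁻¹ F' = -‖G‖² + (Re⟨G,E⟩)² ≤ 0`, so `F' ≤ 0`. -/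
theorem gradient_flow_monotonicity
    {n : ℕ} (I : Set ℝ)
    (E E' G : ℝ → Matrix (Fin n) (Fin n) ℂ) (F c : ℝ → ℝ)
    (hnorm : ∀ t ∈ I, frobNorm (E t) = 1)
    (hEder : ∀ t ∈ I, ∀ i j, HasDerivAt (fun s => E s i j) (E' t i j) t)
    (hode : ∀ t ∈ I, E' t = -(G t) + (frobInner (G t) (E t)).re • E t)
    (hF : ∀ t ∈ I, HasDerivAt F (c t * (frobInner (G t) (E' t)).re) t)
    (hc : ∀ t ∈ I, 0 < c t) :
    ∀ t ∈ I,
      (c t)⁻¹ * deriv F t = -(frobNorm (G t)) ^ 2 + ((frobInner (G t) (E t)).re) ^ 2 ∧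
      deriv F t ≤ 0 :=
  gradient_flow_monotonicity_general I E E' G F c hnorm hode hF hc
end

section
/- Let S be a real-linear subspace of ℂ^{n×n} with orthogonal projection Π^S. Let x, y ∈ ℂⁿ be unit vectors, c ∈ ℂ with c ≠ 0, and G = c · x y*. Let μ ∈ ℝ with μ ≠ 0 and set E = μ⁻¹ · Π^S G; assume ‖E‖_F = 1. Set Y = μ⁻¹ · G (a rank-one matrix) and define P_Y(Z) = Z − (I − x x*) Z (I − y y*). Then −P_Y(G) + Re⟨P_Y(G), E⟩ · Y = 0, i.e. Y is a stationary point of the rank-1 projected differential equation Ẏ = −P_Y G + Re⟨P_Y G, Π^S Y⟩ Y. -/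
open Matrix

/-!
Since `x` is a unit vector, `(I - x x*) G = 0`, so the tangent projection fixes `G`. The projection
property of `Π^S` gives `Re⟨G, Π^S G⟩ = ‖Π^S G‖²`, and `‖E‖ = 1` forces `‖Π^S G‖ = |μ|`; hence
`Re⟨G, E⟩ = μ⁻¹ μ² = μ`, and `-G + μ • μ⁻¹ G = 0`.
-/

theorem one_sub_vecMulVec_mul_vecMulVec_of_dotProduct_eq_one {α m n : Type*} [Ring α]
    [Fintype m] [DecidableEq m] {x u : m → α} (hux : u ⬝ᵥ x = 1) (w : n → α) :
    (1 - vecMulVec x u) * vecMulVec x w = 0 := by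
  rw [Matrix.sub_mul, Matrix.one_mul, vecMulVec_mul_vecMulVec, hux, one_smul, sub_self]

section Frobenius

variable {n : ℕ}

theorem frobInner_real_smul_left (X Y : Matrix (Fin n) (Fin n) ℂ) (r : ℝ) :
    frobInner (r • X) Y = r * frobInner X Y := by
  simp only [frobInner, Matrix.smul_apply, Complex.real_smul, map_mul, Complex.conj_ofReal,
    Finset.mul_sum, mul_assoc]

theorem frobInner_real_smul_right (X Y : Matrix (Fin n) (Fin n) ℂ) (r : ℝ) :
    frobInner X (r • Y) = r * frobInner X Y := by
  simp only [frobInner, Matrix.smul_apply, Complex.real_smul, Finset.mul_sum, mul_left_comm]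

theorem re_frobInner_self_nonneg (X : Matrix (Fin n) (Fin n) ℂ) : 0 ≤ (frobInner X X).re := by
  simp only [frobInner, Complex.re_sum, ← Complex.normSq_eq_conj_mul_self, Complex.ofReal_re]
  exact Finset.sum_nonneg fun i _ => Finset.sum_nonneg fun j _ => Complex.normSq_nonneg _

theorem frobNorm_sq (X : Matrix (Fin n) (Fin n) ℂ) : frobNorm X ^ 2 = (frobInner X X).re :=
  Real.sq_sqrt (re_frobInner_self_nonneg X)

theorem frobNorm_real_smul (X : Matrix (Fin n) (Fin n) ℂ) (r : ℝ) :
    frobNorm (r • X) = |r| * frobNorm X := by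
  rw [frobNorm, frobNorm, frobInner_real_smul_left, frobInner_real_smul_right, ← mul_assoc,
    ← Complex.ofReal_mul, Complex.re_ofReal_mul, Real.sqrt_mul (mul_self_nonneg r),
    Real.sqrt_mul_self_eq_abs]

theorem re_frobInner_self_proj {S : Submodule ℝ (Matrix (Fin n) (Fin n) ℂ)}
    {P : Matrix (Fin n) (Fin n) ℂ → Matrix (Fin n) (Fin n) ℂ} (hPmem : ∀ Z, P Z ∈ S)
    (hPproj : ∀ Z, ∀ W ∈ S, (frobInner (P Z) W).re = (frobInner Z W).re)
    (Z : Matrix (Fin n) (Fin n) ℂ) :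
    (frobInner Z (P Z)).re = frobNorm (P Z) ^ 2 := by
  rw [frobNorm_sq, hPproj Z (P Z) (hPmem Z)]

theorem re_frobInner_inv_smul_proj {S : Submodule ℝ (Matrix (Fin n) (Fin n) ℂ)}
    {P : Matrix (Fin n) (Fin n) ℂ → Matrix (Fin n) (Fin n) ℂ} (hPmem : ∀ Z, P Z ∈ S)
    (hPproj : ∀ Z, ∀ W ∈ S, (frobInner (P Z) W).re = (frobInner Z W).re)
    {G : Matrix (Fin n) (Fin n) ℂ} {μ : ℝ} (hμ : μ ≠ 0) (hnorm : frobNorm (μ⁻¹ • P G) = 1) :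
    (frobInner G (μ⁻¹ • P G)).re = μ := by
  have hPG : frobNorm (P G) = |μ| := by
    rw [frobNorm_real_smul, abs_inv] at hnorm
    field_simp at hnorm
    exact hnorm
  rw [frobInner_real_smul_right, Complex.re_ofReal_mul, re_frobInner_self_proj hPmem hPproj,
    hPG, sq_abs]
  field_simp

end Frobenius

theorem gradient_stationary_to_rank_one_stationary_general
    {n : ℕ} (S : Submodule ℝ (Matrix (Fin n) (Fin n) ℂ))
    (P : Matrix (Fin n) (Fin n) ℂ →ₗ[ℝ] Matrix (Fin n) (Fin n) ℂ)
    (hPmem : ∀ Z, P Z ∈ S)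
    (hPproj : ∀ Z, ∀ W ∈ S, (frobInner (P Z) W).re = (frobInner Z W).re)
    (x y : Fin n → ℂ) (hx : star x ⬝ᵥ x = 1)
    (c : ℂ) (μ : ℝ) (hμ : μ ≠ 0)
    (G E Y : Matrix (Fin n) (Fin n) ℂ)
    (hG : G = c • vecMulVec x (star y))
    (hE : E = μ⁻¹ • P G) (hEnorm : frobNorm E = 1)
    (hY : Y = μ⁻¹ • G)
    (PY : Matrix (Fin n) (Fin n) ℂ → Matrix (Fin n) (Fin n) ℂ)
    (hPY : ∀ Z, PY Z = Z - (1 - vecMulVec x (star x)) * Z * (1 - vecMulVec y (star y))) :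
    -(PY G) + (frobInner (PY G) E).re • Y = 0 := by
  have hPYG : PY G = G := by
    rw [hPY, hG, Matrix.mul_smul, one_sub_vecMulVec_mul_vecMulVec_of_dotProduct_eq_one hx,
      smul_zero, Matrix.zero_mul, sub_zero]
  have hGE : (frobInner G E).re = μ := by
    subst hE
    exact re_frobInner_inv_smul_proj hPmem hPproj hμ hEnorm
  rw [hPYG, hGE, hY, smul_smul, mul_inv_cancel₀ hμ, one_smul, neg_add_cancel]

/-- If `E = μ⁻¹ Π^S G` is a stationary point of the structure-constrained gradient system
(`G = c·x y*`, `μ ≠ 0` real, `‖E‖_F = 1`), then `Y = μ⁻¹ G ∈ M₁` is a stationary point of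
the rank-1 projected differential equation: `-P_Y(G) + Re⟨P_Y(G), E⟩·Y = 0`. -/
theorem gradient_stationary_to_rank_one_stationary
    {n : ℕ} (S : Submodule ℝ (Matrix (Fin n) (Fin n) ℂ))
    (P : Matrix (Fin n) (Fin n) ℂ →ₗ[ℝ] Matrix (Fin n) (Fin n) ℂ)
    (hPmem : ∀ Z, P Z ∈ S)
    (hPproj : ∀ Z, ∀ W ∈ S, (frobInner (P Z) W).re = (frobInner Z W).re)
    (x y : Fin n → ℂ) (hx : star x ⬝ᵥ x = 1) (hy : star y ⬝ᵥ y = 1)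
    (c : ℂ) (hc : c ≠ 0) (μ : ℝ) (hμ : μ ≠ 0)
    (G E Y : Matrix (Fin n) (Fin n) ℂ)
    (hG : G = c • vecMulVec x (star y))
    (hE : E = μ⁻¹ • P G) (hEnorm : frobNorm E = 1)
    (hY : Y = μ⁻¹ • G)
    (PY : Matrix (Fin n) (Fin n) ℂ → Matrix (Fin n) (Fin n) ℂ)
    (hPY : ∀ Z, PY Z = Z - (1 - vecMulVec x (star x)) * Z * (1 - vecMulVec y (star y))) :
    -(PY G) + (frobInner (PY G) E).re • Y = 0 :=
  gradient_stationary_to_rank_one_stationary_general S P hPmem hPproj x y hx c μ hμ G E Y hG hE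
    hEnorm hY PY hPY
end
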